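/- arXiv:1905.10821 — 2 statements merged into one kernel-verified Lean document; each statement's English description precedes it below -/
import Mathlib

section
/- Let X_1,…,X_T be i.i.d. random variables with values in [0,1]^m and let 𝓛_L be the class of real-valued L-Lipschitz functions on [0,1]^m. Then for every ε > 0, P( sup_{f∈𝓛_L} |(1/T)∑_{i=1}^T f(X_i) − E f(X)| > ε ) ≤ 2 D^{−m/(m+2)} exp( −log(T)·[C₁ D − 1] ), where D = (T/log T)·(ε/(C₂ L))^{m+2} and C₁, C₂ are positive universal constants (depending only on m). -/
/-!
Cut `[0,1]^m` into `(K+1)^m` cubes of side `1/(K+1)`, with `K ≈ 4L/ε`. Replacing an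
`L`-Lipschitz `f` by its value at the corner of the cube containing `x` moves both the
empirical mean and the expectation by at most `L/(K+1)`, and for a function `g` constant on
cubes the deviation is `∑_c g(c) (ν_c - p_c)`, where `ν_c` and `p_c` are the empirical and true
cell frequencies; hence it is at most `L ∑_c |ν_c - p_c|`. That `ℓ¹` distance is the largest
deviation of the `±1`-valued functions `σ ∘ cell` over the `2^((K+1)^m)` sign patterns `σ`, so a
union bound and Hoeffding's inequality give probability at most
`2^((K+1)^m) exp(-T ε² / (8 L²))`. With `C₁ = 1` and `C₂ = 32 · 6^m` this is below the stated
bound whenever `D > 1` and `ε < L`; for `D ≤ 1` the bound exceeds `1`, and for `ε ≥ L` the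
supremum never exceeds `L`.
-/

open MeasureTheory ProbabilityTheory Finset Real

noncomputable def deviation {Ω α : Type*} [MeasurableSpace Ω] (P : Measure Ω)
    (X : ℕ → Ω → α) (T : ℕ) (φ : α → ℝ) (ω : Ω) : ℝ :=
  (1 / (T : ℝ)) * ∑ i ∈ range T, φ (X i ω) - ∫ ω', φ (X 0 ω') ∂P

lemma abs_one_div_mul_sum_range_le {u : ℕ → ℝ} {δ : ℝ} (T : ℕ) (h : ∀ i, |u i| ≤ δ) :
    |(1 / (T : ℝ)) * ∑ i ∈ range T, u i| ≤ δ := by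
  rcases T.eq_zero_or_pos with rfl | hT
  · simpa using (abs_nonneg _).trans (h 0)
  rw [abs_mul, abs_of_pos (by positivity)]
  calc 1 / (T : ℝ) * |∑ i ∈ range T, u i| ≤ 1 / T * ∑ _i ∈ range T, δ := by
        gcongr
        exact (abs_sum_le_sum_abs _ _).trans (sum_le_sum fun i _ => h i)
    _ = δ := by simp [field]

section Deviation

variable {Ω α : Type*} [MeasurableSpace Ω] (P : Measure Ω) [IsProbabilityMeasure P]
  (X : ℕ → Ω → α) (T : ℕ)

lemma abs_deviation_sub_deviation_le {φ ψ : α → ℝ} {δ : ℝ}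
    (hφ : Integrable (fun ω => φ (X 0 ω)) P) (hψ : Integrable (fun ω => ψ (X 0 ω)) P)
    (h : ∀ i ω, |φ (X i ω) - ψ (X i ω)| ≤ δ) (ω : Ω) :
    |deviation P X T φ ω - deviation P X T ψ ω| ≤ 2 * δ := by
  have hsplit : deviation P X T φ ω - deviation P X T ψ ω
      = (1 / (T : ℝ)) * ∑ i ∈ range T, (φ (X i ω) - ψ (X i ω))
        - ∫ ω', (φ (X 0 ω') - ψ (X 0 ω')) ∂P := by
    rw [deviation, deviation, integral_sub hφ hψ, sum_sub_distrib]
    ring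
  have hint : |∫ ω', (φ (X 0 ω') - ψ (X 0 ω')) ∂P| ≤ δ := by
    simpa using norm_integral_le_of_norm_le_const (μ := P)
      (ae_of_all _ fun ω' => (Real.norm_eq_abs _).trans_le (h 0 ω'))
  rw [hsplit, two_mul]
  exact (abs_sub _ _).trans (add_le_add (abs_one_div_mul_sum_range_le T fun i => h i ω) hint)

lemma abs_deviation_le {φ : α → ℝ} {δ : ℝ} (hT : 0 < T)
    (hφ : Integrable (fun ω => φ (X 0 ω)) P)
    (h : ∀ i ω ω', |φ (X i ω) - φ (X 0 ω')| ≤ δ) (ω : Ω) :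
    |deviation P X T φ ω| ≤ δ := by
  have hsplit : deviation P X T φ ω
      = (1 / (T : ℝ)) * ∑ i ∈ range T, ∫ ω', (φ (X i ω) - φ (X 0 ω')) ∂P := by
    simp_rw [integral_sub (integrable_const _) hφ, sum_sub_distrib, deviation]
    simp [field]
  rw [hsplit]
  refine abs_one_div_mul_sum_range_le T fun i => ?_
  simpa using norm_integral_le_of_norm_le_const (μ := P)
    (ae_of_all _ fun ω' => (Real.norm_eq_abs _).trans_le (h i ω ω'))

lemma deviation_sub_const {φ : α → ℝ} (hT : 0 < T) (hφ : Integrable (fun ω => φ (X 0 ω)) P)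
    (b : ℝ) (ω : Ω) :
    deviation P X T (fun x => φ x - b) ω = deviation P X T φ ω := by
  simp only [deviation, sum_sub_distrib, integral_sub hφ (integrable_const b)]
  simp [field]
  ring

variable [MeasurableSpace α]

lemma deviation_comp_eq_sum {κ : Type*} [Fintype κ] [DecidableEq κ] [MeasurableSpace κ]
    [MeasurableSingletonClass κ] {q : α → κ} (hq : Measurable q) (hX : Measurable (X 0))
    (g : κ → ℝ) (ω : Ω) :
    deviation P X T (fun x => g (q x)) ω
      = ∑ c, g c * deviation P X T (fun x => if q x = c then 1 else 0) ω := by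
  have hg : ∀ x, g (q x) = ∑ c, g c * (if q x = c then 1 else 0) := by
    simp
  have hint : ∀ c, Integrable (fun ω => g c * (if q (X 0 ω) = c then (1 : ℝ) else 0)) P := by
    intro c
    refine Integrable.const_mul (Integrable.of_bound ?_ 1 (ae_of_all _ fun ω => ?_)) _
    · exact ((measurable_of_finite fun c' => if c' = c then (1 : ℝ) else 0).comp
        (hq.comp hX)).aestronglyMeasurable
    · split_ifs <;> simp
  simp only [deviation, hg, integral_finsetSum _ fun c _ => hint c, integral_const_mul,
    mul_sub, sum_sub_distrib, mul_sum]
  rw [sum_comm]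
  simp only [mul_left_comm]

lemma measureReal_le_deviation_le {h : α → ℝ} (hh : Measurable h)
    (hb : ∀ x, h x ∈ Set.Icc (-1) 1) (hX : ∀ i, Measurable (X i)) (hindep : iIndepFun X P)
    (hident : ∀ i, P.map (X i) = P.map (X 0)) (hT : 0 < T) {a : ℝ} (ha : 0 ≤ a) :
    P.real {ω | a ≤ deviation P X T h ω} ≤ exp (-(T * a ^ 2 / 2)) := by
  have hmean : ∀ i, ∫ ω, h (X i ω) ∂P = ∫ ω, h (X 0 ω) ∂P := fun i => by
    rw [← integral_map (hX i).aemeasurable hh.aestronglyMeasurable, hident i,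
      integral_map (hX 0).aemeasurable hh.aestronglyMeasurable]
  have hevent : {ω | a ≤ deviation P X T h ω}
      = {ω | T * a ≤ ∑ i ∈ range T, (h (X i ω) - ∫ ω', h (X i ω') ∂P)} := by
    ext ω
    simp only [Set.mem_ofPred_eq, deviation, hmean, sum_sub_distrib, sum_const, card_range,
      nsmul_eq_mul]
    rw [← mul_le_mul_iff_of_pos_left (by positivity : (0 : ℝ) < T), mul_sub, ← mul_assoc]
    simp [field]
  have hsubG : ∀ i < T, HasSubgaussianMGF (fun ω => h (X i ω) - ∫ ω', h (X i ω') ∂P) 1 P := by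
    intro i _
    convert hasSubgaussianMGF_of_mem_Icc (X := fun ω => h (X i ω))
      (hh.comp (hX i)).aemeasurable (ae_of_all P fun ω => hb (X i ω)) using 1
    rw [show (1 : ℝ) - -1 = 2 by norm_num]
    simp
  have hindep' : iIndepFun (fun i ω => h (X i ω) - ∫ ω', h (X i ω') ∂P) P :=
    hindep.comp (fun i x => h x - ∫ ω', h (X i ω') ∂P) fun i => hh.sub_const _
  rw [hevent]
  convert HasSubgaussianMGF.measure_sum_range_ge_le_of_iIndepFun hindep' hsubG
    (by positivity : 0 ≤ (T : ℝ) * a) using 2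
  field_simp
  simp

lemma measureReal_le_sum_abs_deviation_le {κ : Type*} [Fintype κ] [DecidableEq κ]
    [MeasurableSpace κ] [MeasurableSingletonClass κ] {q : α → κ} (hq : Measurable q)
    (hX : ∀ i, Measurable (X i)) (hindep : iIndepFun X P)
    (hident : ∀ i, P.map (X i) = P.map (X 0)) (hT : 0 < T) {a : ℝ} (ha : 0 ≤ a) :
    P.real {ω | a ≤ ∑ c, |deviation P X T (fun x => if q x = c then 1 else 0) ω|}
      ≤ 2 ^ Fintype.card κ * exp (-(T * a ^ 2 / 2)) := by
  let sign (s : κ → Bool) (c : κ) : ℝ := if s c then 1 else -1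
  have hcover : {ω | a ≤ ∑ c, |deviation P X T (fun x => if q x = c then 1 else 0) ω|}
      ⊆ ⋃ s : κ → Bool, {ω | a ≤ deviation P X T (fun x => sign s (q x)) ω} := by
    intro ω hω
    refine Set.mem_iUnion.2
      ⟨fun c => decide (0 ≤ deviation P X T (fun x => if q x = c then 1 else 0) ω), ?_⟩
    simp only [Set.mem_ofPred_eq, deviation_comp_eq_sum P X T hq (hX 0)] at hω ⊢
    refine hω.trans_eq (sum_congr rfl fun c _ => ?_)
    by_cases h : 0 ≤ deviation P X T (fun x => if q x = c then 1 else 0) ω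
    · simp [sign, h, abs_of_nonneg h]
    · simp [sign, h, abs_of_neg (not_le.1 h)]
  calc _ ≤ ∑ s : κ → Bool, P.real {ω | a ≤ deviation P X T (fun x => sign s (q x)) ω} :=
        (measureReal_mono hcover).trans (measureReal_iUnion_fintype_le _)
    _ ≤ ∑ _s : κ → Bool, exp (-(T * a ^ 2 / 2)) := by
        refine sum_le_sum fun s _ => measureReal_le_deviation_le P X T
          ((measurable_of_finite (sign s)).comp hq) (fun x => ?_) hX hindep hident hT ha
        by_cases h : s (q x) <;> simp [sign, h]
    _ = 2 ^ Fintype.card κ * exp (-(T * a ^ 2 / 2)) := by simp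

end Deviation

lemma abs_sub_min_floor_div_le {t : ℝ} (ht : t ∈ Set.Icc (0 : ℝ) 1) (K : ℕ) :
    |t - (min ⌊t * (K + 1)⌋₊ K : ℕ) / (K + 1)| ≤ 1 / (K + 1) := by
  obtain ⟨ht0, ht1⟩ := ht
  have hlow : ((min ⌊t * (K + 1)⌋₊ K : ℕ) : ℝ) ≤ t * (K + 1) :=
    (Nat.cast_le.2 (min_le_left _ _)).trans (Nat.floor_le (by positivity))
  have hup : t * (K + 1) ≤ (min ⌊t * (K + 1)⌋₊ K : ℕ) + 1 := by
    rcases le_total ⌊t * (K + 1)⌋₊ K with h | h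
    · rw [min_eq_left h]
      exact (Nat.lt_floor_add_one _).le
    · rw [min_eq_right h]
      nlinarith
  generalize ((min ⌊t * (K + 1)⌋₊ K : ℕ) : ℝ) = n at hlow hup ⊢
  have hK : (0 : ℝ) < K + 1 := by positivity
  rw [show t - n / (K + 1) = (t * (K + 1) - n) / (K + 1) by field_simp, abs_div,
    abs_of_pos hK, div_le_div_iff_of_pos_right hK, abs_le]
  constructor <;> linarith

-- The `min` puts the face `x j = 1` into the last cell.
noncomputable def gridCell {ι : Type*} (K : ℕ) (x : ι → ℝ) : ι → Fin (K + 1) :=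
  fun j => ⟨min ⌊x j * (K + 1)⌋₊ K, Nat.lt_succ_of_le (min_le_right _ _)⟩

noncomputable def gridCorner {ι : Type*} (K : ℕ) (c : ι → Fin (K + 1)) : ι → ℝ :=
  fun j => (c j : ℝ) / (K + 1)

section Grid

variable {ι : Type*} (K : ℕ)

lemma measurable_gridCell : Measurable (gridCell (ι := ι) K) :=
  measurable_pi_lambda _ fun j => (measurable_of_countable fun n : ℕ =>
    (⟨min n K, Nat.lt_succ_of_le (min_le_right _ _)⟩ : Fin (K + 1))).comp
      (Nat.measurable_floor.comp ((measurable_pi_apply j).mul_const _))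

lemma gridCorner_mem_Icc (c : ι → Fin (K + 1)) : gridCorner K c ∈ Set.Icc 0 1 :=
  ⟨fun j => by simp only [gridCorner, Pi.zero_apply]; positivity,
   fun j => by
    simp only [gridCorner, Pi.one_apply]
    rw [div_le_one (by positivity)]
    exact_mod_cast (c j).is_le.trans (Nat.le_succ K)⟩

lemma norm_sub_gridCorner_gridCell_le [Fintype ι] {x : ι → ℝ} (hx : x ∈ Set.Icc 0 1) :
    ‖x - gridCorner K (gridCell K x)‖ ≤ 1 / (K + 1) :=
  (pi_norm_le_iff_of_nonneg (by positivity)).2 fun j =>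
    abs_sub_min_floor_div_le ⟨hx.1 j, hx.2 j⟩ K

end Grid

lemma norm_sub_le_one_of_mem_Icc {ι : Type*} [Fintype ι] {x y : ι → ℝ}
    (hx : x ∈ Set.Icc 0 1) (hy : y ∈ Set.Icc 0 1) : ‖x - y‖ ≤ 1 := by
  rw [← dist_eq_norm]
  refine (Real.dist_le_of_mem_pi_Icc hx hy).trans ((dist_pi_le_iff zero_le_one).2 fun j => ?_)
  simp

lemma ContinuousOn.measurable_comp_of_forall_mem {α β γ : Type*} [MeasurableSpace α]
    [TopologicalSpace β] [MeasurableSpace β] [OpensMeasurableSpace β] [TopologicalSpace γ]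
    [MeasurableSpace γ] [BorelSpace γ] {f : β → γ} {s : Set β} (hf : ContinuousOn f s)
    {W : α → β} (hW : Measurable W) (hWs : ∀ a, W a ∈ s) : Measurable fun a => f (W a) :=
  hf.domRestrict.measurable.comp (hW.subtype_mk (h := hWs))

def lipschitzClass (ι : Type*) [Fintype ι] (L : ℝ) : Set ((ι → ℝ) → ℝ) :=
  {f | ∀ x ∈ Set.Icc (0 : ι → ℝ) 1, ∀ y ∈ Set.Icc (0 : ι → ℝ) 1, |f x - f y| ≤ L * ‖x - y‖}

lemma integrable_comp_of_mem_lipschitzClass {Ω ι : Type*} [MeasurableSpace Ω] [Fintype ι]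
    (P : Measure Ω) [IsFiniteMeasure P] {L : ℝ} (hL : 0 ≤ L) {f : (ι → ℝ) → ℝ}
    (hf : f ∈ lipschitzClass ι L) {W : Ω → ι → ℝ} (hW : Measurable W)
    (hWI : ∀ ω, W ω ∈ Set.Icc 0 1) :
    Integrable (fun ω => f (W ω)) P := by
  have hcont : ContinuousOn f (Set.Icc 0 1) :=
    (LipschitzOnWith.of_dist_le_mul (K := L.toNNReal) fun x hx y hy => by
      simpa [Real.dist_eq, dist_eq_norm, hL] using hf x hx y hy).continuousOn
  refine Integrable.of_bound (hcont.measurable_comp_of_forall_mem hW hWI).aestronglyMeasurable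
    (|f 0| + L) (ae_of_all _ fun ω => ?_)
  have h0 : (0 : ι → ℝ) ∈ Set.Icc 0 1 := Set.left_mem_Icc.2 zero_le_one
  have := hf _ (hWI ω) 0 h0
  have := norm_sub_le_one_of_mem_Icc (hWI ω) h0
  rw [Real.norm_eq_abs]
  nlinarith [abs_sub_abs_le_abs_sub (f (W ω)) (f 0)]

section LipschitzDeviation

variable {Ω ι : Type*} [MeasurableSpace Ω] (P : Measure Ω) [IsProbabilityMeasure P] [Fintype ι]
  (X : ℕ → Ω → ι → ℝ) (T : ℕ) {L : ℝ} {f : (ι → ℝ) → ℝ}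

lemma abs_deviation_le_of_mem_lipschitzClass (hL : 0 ≤ L) (hf : f ∈ lipschitzClass ι L)
    (hX : Measurable (X 0)) (hXI : ∀ i ω, X i ω ∈ Set.Icc 0 1) (hT : 0 < T) (ω : Ω) :
    |deviation P X T f ω| ≤ L :=
  abs_deviation_le P X T hT (integrable_comp_of_mem_lipschitzClass P hL hf hX (hXI 0))
    (fun i ω ω' => (hf _ (hXI i ω) _ (hXI 0 ω')).trans
      (mul_le_of_le_one_right hL (norm_sub_le_one_of_mem_Icc (hXI i ω) (hXI 0 ω')))) ω

lemma abs_deviation_le_grid_of_mem_lipschitzClass [DecidableEq ι] (hL : 0 ≤ L)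
    (hf : f ∈ lipschitzClass ι L) (hX : Measurable (X 0)) (hXI : ∀ i ω, X i ω ∈ Set.Icc 0 1)
    (hT : 0 < T) (K : ℕ) (ω : Ω) :
    |deviation P X T f ω| ≤ 2 * (L / (K + 1)) +
      L * ∑ c, |deviation P X T (fun x => if gridCell K x = c then 1 else 0) ω| := by
  have h0 : (0 : ι → ℝ) ∈ Set.Icc 0 1 := Set.left_mem_Icc.2 zero_le_one
  let g (c : ι → Fin (K + 1)) : ℝ := f (gridCorner K c) - f 0
  have hfX : Integrable (fun ω => f (X 0 ω)) P :=
    integrable_comp_of_mem_lipschitzClass P hL hf hX (hXI 0)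
  have hg : ∀ c, |g c| ≤ L := fun c =>
    (hf _ (gridCorner_mem_Icc K c) 0 h0).trans
      (mul_le_of_le_one_right hL (norm_sub_le_one_of_mem_Icc (gridCorner_mem_Icc K c) h0))
  have hgX : Integrable (fun ω => g (gridCell K (X 0 ω))) P :=
    Integrable.of_bound (((measurable_of_finite g).comp
      ((measurable_gridCell K).comp hX)).aestronglyMeasurable) L (ae_of_all _ fun ω => hg _)
  have happrox :
      ∀ x ∈ Set.Icc (0 : ι → ℝ) 1, |(f x - f 0) - g (gridCell K x)| ≤ L / (K + 1) :=
    fun x hx => by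
      calc |(f x - f 0) - g (gridCell K x)| = |f x - f (gridCorner K (gridCell K x))| := by
            simp only [g, sub_sub_sub_cancel_right]
        _ ≤ L * (1 / (K + 1)) := (hf _ hx _ (gridCorner_mem_Icc K _)).trans
            (mul_le_mul_of_nonneg_left (norm_sub_gridCorner_gridCell_le K hx) hL)
        _ = L / (K + 1) := by ring
  have hdisc := abs_deviation_sub_deviation_le P X T (φ := fun x => f x - f 0)
    (ψ := fun x => g (gridCell K x)) (hfX.sub (integrable_const (f 0))) hgX
    (fun i ω => happrox _ (hXI i ω)) ω
  rw [deviation_sub_const P X T hT hfX] at hdisc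
  have hcells : |deviation P X T (fun x => g (gridCell K x)) ω|
      ≤ L * ∑ c, |deviation P X T (fun x => if gridCell K x = c then 1 else 0) ω| := by
    rw [deviation_comp_eq_sum P X T (measurable_gridCell K) hX, mul_sum]
    refine (abs_sum_le_sum_abs _ _).trans (sum_le_sum fun c _ => ?_)
    rw [abs_mul]
    exact mul_le_mul_of_nonneg_right (hg c) (abs_nonneg _)
  linarith [abs_sub_abs_le_abs_sub (deviation P X T f ω)
    (deviation P X T (fun x => g (gridCell K x)) ω)]

lemma measureReal_lt_iSup_abs_deviation_le [DecidableEq ι] (hL : 0 < L) {ε : ℝ} (hε : 0 < ε)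
    (hX : ∀ i, Measurable (X i)) (hXI : ∀ i ω, X i ω ∈ Set.Icc 0 1) (hindep : iIndepFun X P)
    (hident : ∀ i, P.map (X i) = P.map (X 0)) (hT : 0 < T) {K : ℕ}
    (hK : 4 * L ≤ (K + 1) * ε) :
    P.real {ω | ε < ⨆ f : lipschitzClass ι L, |deviation P X T f ω|}
      ≤ 2 ^ (K + 1) ^ Fintype.card ι * exp (-(T * (ε / L / 2) ^ 2 / 2)) := by
  have hsub : {ω | ε < ⨆ f : lipschitzClass ι L, |deviation P X T f ω|}
      ⊆ {ω | ε / L / 2 ≤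
          ∑ c, |deviation P X T (fun x => if gridCell K x = c then 1 else 0) ω|} := by
    intro ω hω
    have hsup := Real.iSup_le (fun f : lipschitzClass ι L =>
      abs_deviation_le_grid_of_mem_lipschitzClass P X T hL.le f.2 (hX 0) hXI hT K ω)
      (by positivity)
    have hmesh : L / (K + 1) ≤ ε / 4 := by rw [div_le_iff₀ (by positivity)]; linarith
    simp only [Set.mem_ofPred_eq] at hω ⊢
    rw [div_div, div_le_iff₀ (by positivity)]
    nlinarith
  refine (measureReal_mono hsub).trans ?_
  simpa using measureReal_le_sum_abs_deviation_le P X T (measurable_gridCell K) hX hindep hident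
    hT (by positivity : 0 ≤ ε / L / 2)

end LipschitzDeviation

lemma one_le_two_mul_rpow_mul_exp {D p t : ℝ} (hD0 : 0 < D) (hD1 : D ≤ 1) (hp : p ≤ 0)
    (ht : 0 ≤ t) : 1 ≤ 2 * D ^ p * exp (-t * (D - 1)) := by
  have h1 : 1 ≤ D ^ p := one_le_rpow_of_pos_of_le_one_of_nonpos hD0 hD1 hp
  have h2 : 1 ≤ exp (-t * (D - 1)) := one_le_exp (by nlinarith)
  nlinarith

lemma natCast_mul_log_two_add_le {m N : ℕ} {T r D : ℝ} (hT : 2 ≤ T) (hr0 : 0 < r)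
    (hr1 : r ≤ 1) (hN : N * r ^ m ≤ 6 ^ m)
    (hD_def : D = T / log T * (r / (32 * 6 ^ m)) ^ (m + 2)) (hD : 1 < D) :
    N * log 2 + (m / (m + 2) : ℝ) * log D + log T * D ≤ T * r ^ 2 / 8 := by
  have hlog2 : 1 / 2 < log 2 := lt_trans (by norm_num) log_two_gt_d9
  have ht : log 2 ≤ log T := log_le_log (by norm_num) hT
  have ht0 : 0 < log T := by linarith
  have htD : log T * D = T * r ^ m * r ^ 2 / (32 * 6 ^ m) ^ (m + 2) := by
    rw [hD_def, div_pow, pow_add]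
    field_simp
  set t := log T
  set Q : ℝ := (32 * 6 ^ m) ^ (m + 2)
  set B := T * r ^ 2
  have h6 : (1 : ℝ) ≤ 6 ^ m := one_le_pow₀ (by norm_num)
  have hQ : 32 * 6 ^ m ≤ Q := le_self_pow₀ (by linarith) (by omega)
  have hB : 0 < B := by positivity
  have htD_le : t * D ≤ B / Q := by
    rw [htD, mul_right_comm]
    gcongr
    exact mul_le_of_le_one_right hB.le (pow_le_one₀ hr0.le hr1)
  have htQ : t * Q < T * r ^ m * r ^ 2 :=
    calc t * Q < t * Q * D := lt_mul_of_one_lt_right (by positivity) hD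
      _ = T * r ^ m * r ^ 2 := by rw [mul_right_comm, htD, div_mul_cancel₀ _ (by positivity)]
  have hNlog : N * log 2 ≤ 6 ^ m * B / Q := by
    rw [le_div_iff₀ (by positivity)]
    calc N * log 2 * Q ≤ N * (t * Q) := by
          rw [mul_assoc]; gcongr
      _ ≤ N * (T * r ^ m * r ^ 2) := by gcongr
      _ = N * r ^ m * B := by ring
      _ ≤ 6 ^ m * B := by gcongr
  have hlogD : (m / (m + 2) : ℝ) * log D ≤ 2 * (t * D) := by
    have hα : (m / (m + 2) : ℝ) ≤ 1 := by rw [div_le_one (by positivity)]; linarith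
    calc (m / (m + 2) : ℝ) * log D ≤ log D := mul_le_of_le_one_left (log_nonneg hD.le) hα
      _ ≤ D := (log_le_sub_one_of_pos (by linarith)).trans (by linarith)
      _ ≤ 2 * (t * D) := by nlinarith
  -- This is where `C₂ = 32 · 6 ^ m` comes from: `Q ≥ 32 · 6 ^ m ≥ 8 (6 ^ m + 3)`.
  have hQ_large : (6 ^ m + 3) * B / Q ≤ B / 8 := by
    rw [div_le_div_iff₀ (by positivity) (by norm_num)]
    nlinarith
  have : (6 ^ m + 3) * B / Q = 6 ^ m * B / Q + 3 * (B / Q) := by ring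
  linarith

lemma two_pow_mul_exp_le {m K : ℕ} {T r D : ℝ} (hT : 2 ≤ T) (hr0 : 0 < r) (hr1 : r ≤ 1)
    (hK : (K + 1) * r ≤ 6) (hD_def : D = T / log T * (r / (32 * 6 ^ m)) ^ ((m : ℝ) + 2))
    (hD : 1 < D) :
    2 ^ (K + 1) ^ m * exp (-(T * (r / 2) ^ 2 / 2))
      ≤ 2 * D ^ (-(m : ℝ) / (m + 2)) * exp (-log T * (D - 1)) := by
  have hN : (((K + 1) ^ m : ℕ) : ℝ) * r ^ m ≤ 6 ^ m := by
    push_cast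
    rw [← mul_pow]
    exact pow_le_pow_left₀ (by positivity) hK m
  rw [show (m : ℝ) + 2 = (m + 2 : ℕ) by push_cast; ring, rpow_natCast] at hD_def
  have hsum := natCast_mul_log_two_add_le hT hr0 hr1 hN hD_def hD
  calc 2 ^ (K + 1) ^ m * exp (-(T * (r / 2) ^ 2 / 2))
      = exp (((K + 1) ^ m : ℕ) * log 2 - T * r ^ 2 / 8) := by
        rw [sub_eq_add_neg, exp_add, ← rpow_natCast, rpow_def_of_pos two_pos]
        ring_nf
    _ ≤ exp (log 2 + log D * (-(m : ℝ) / (m + 2)) + -log T * (D - 1)) := by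
        gcongr
        have : log D * (-(m : ℝ) / (m + 2)) = -((m / (m + 2) : ℝ) * log D) := by ring
        nlinarith [log_pos one_lt_two, log_nonneg (by linarith : (1 : ℝ) ≤ T)]
    _ = 2 * D ^ (-(m : ℝ) / (m + 2)) * exp (-log T * (D - 1)) := by
        rw [exp_add, exp_add, exp_log two_pos, ← rpow_def_of_pos (by linarith)]

lemma natCeil_resolution_bounds {L ε : ℝ} (hε : 0 < ε) (hεL : ε ≤ L) :
    4 * L ≤ (⌈4 * L / ε⌉₊ + 1) * ε ∧ (⌈4 * L / ε⌉₊ + 1) * (ε / L) ≤ 6 := by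
  have hL : 0 < L := hε.trans_le hεL
  have hle := Nat.le_ceil (4 * L / ε)
  have hlt : (⌈4 * L / ε⌉₊ : ℝ) < 4 * L / ε + 1 := Nat.ceil_lt_add_one (by positivity)
  rw [div_le_iff₀ hε] at hle
  refine ⟨by nlinarith, ?_⟩
  calc (⌈4 * L / ε⌉₊ + 1) * (ε / L) ≤ (4 * L / ε + 2) * (ε / L) :=
        mul_le_mul_of_nonneg_right (by linarith) (by positivity)
    _ = 4 + 2 * (ε / L) := by field_simp
    _ ≤ 6 := by linarith [(div_le_one hL).2 hεL]

theorem stmt_5_general (m : ℕ) :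
    ∃ C₁ C₂ : ℝ, 0 < C₁ ∧ 0 < C₂ ∧
      ∀ {Ω : Type} [MeasurableSpace Ω] (P : Measure Ω) [IsProbabilityMeasure P]
        (T : ℕ), 1 < T →
        ∀ (X : ℕ → Ω → (Fin m → ℝ)),
          (∀ i, Measurable (X i)) →
          (∀ i ω, X i ω ∈ Set.Icc (0 : Fin m → ℝ) 1) →
          iIndepFun X P →
          (∀ i, Measure.map (X i) P = Measure.map (X 0) P) →
          ∀ (L ε : ℝ), 0 < L → 0 < ε →
            P {ω | ε < ⨆ f : {f : (Fin m → ℝ) → ℝ //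
                  ∀ x ∈ Set.Icc (0 : Fin m → ℝ) 1, ∀ y ∈ Set.Icc (0 : Fin m → ℝ) 1,
                    |f x - f y| ≤ L * ‖x - y‖},
                |(1 / (T : ℝ)) * ∑ i ∈ range T, (f : (Fin m → ℝ) → ℝ) (X i ω)
                  - ∫ ω', (f : (Fin m → ℝ) → ℝ) (X 0 ω') ∂P|}
              ≤ ENNReal.ofReal
                  (2 * ((T / Real.log T) * (ε / (C₂ * L)) ^ ((m : ℝ) + 2))
                        ^ (-(m : ℝ) / ((m : ℝ) + 2))
                    * Real.exp (-(Real.log T)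
                        * (C₁ * ((T / Real.log T) * (ε / (C₂ * L)) ^ ((m : ℝ) + 2)) - 1))) := by
  refine ⟨1, 32 * 6 ^ m, one_pos, by positivity, ?_⟩
  intro Ω _ P _ T hT X hX hXI hindep hident L ε hL hε
  have hT0 : 0 < T := by omega
  have hT2 : (2 : ℝ) ≤ T := by exact_mod_cast hT
  set D := (T / log T) * (ε / (32 * 6 ^ m * L)) ^ ((m : ℝ) + 2) with hD_def
  rw [one_mul]
  have hlogT : 0 < log T := log_pos (by linarith)
  have hD0 : 0 < D := mul_pos (div_pos (by positivity) hlogT) (rpow_pos_of_pos (by positivity) _)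
  rcases le_or_gt D 1 with hD1 | hD1
  · exact prob_le_one.trans (ENNReal.one_le_ofReal.2 (one_le_two_mul_rpow_mul_exp
      hD0 hD1 (div_nonpos_of_nonpos_of_nonneg (by simp) (by positivity)) hlogT.le))
  rcases le_or_gt L ε with hLε | hεL
  · refine (measure_mono_null (fun ω hω => ?_) measure_empty).trans_le zero_le
    exact (Real.iSup_le (fun f : lipschitzClass (Fin m) L =>
      abs_deviation_le_of_mem_lipschitzClass P X T hL.le f.2 (hX 0) hXI hT0 ω) hL.le).not_gt
      (hLε.trans_lt hω)
  obtain ⟨hK_fine, hK_coarse⟩ := natCeil_resolution_bounds hε hεL.le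
  have hprob := measureReal_lt_iSup_abs_deviation_le P X T hL hε hX hXI hindep hident hT0 hK_fine
  rw [Fintype.card_fin] at hprob
  rw [← ofReal_measureReal]
  exact ENNReal.ofReal_le_ofReal (hprob.trans (two_pow_mul_exp_le hT2 (by positivity)
    ((div_le_one hL).2 hεL.le) hK_coarse (by rw [hD_def, div_div, mul_comm L]) hD1))

/-- Uniform deviation (discrepancy) bound for the class of `L`-Lipschitz functions
on `[0,1]^m` under i.i.d. sampling. -/
theorem stmt_5 (m : ℕ) (hm : 0 < m) :
    ∃ C₁ C₂ : ℝ, 0 < C₁ ∧ 0 < C₂ ∧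
      ∀ {Ω : Type} [MeasurableSpace Ω] (P : Measure Ω) [IsProbabilityMeasure P]
        (T : ℕ), 1 < T →
        ∀ (X : ℕ → Ω → (Fin m → ℝ)),
          (∀ i, Measurable (X i)) →
          (∀ i ω, X i ω ∈ Set.Icc (0 : Fin m → ℝ) 1) →
          iIndepFun X P →
          (∀ i, Measure.map (X i) P = Measure.map (X 0) P) →
          ∀ (L ε : ℝ), 0 < L → 0 < ε →
            P {ω | ε < ⨆ f : {f : (Fin m → ℝ) → ℝ //
                  ∀ x ∈ Set.Icc (0 : Fin m → ℝ) 1, ∀ y ∈ Set.Icc (0 : Fin m → ℝ) 1,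
                    |f x - f y| ≤ L * ‖x - y‖},
                |(1 / (T : ℝ)) * ∑ i ∈ range T, (f : (Fin m → ℝ) → ℝ) (X i ω)
                  - ∫ ω', (f : (Fin m → ℝ) → ℝ) (X 0 ω') ∂P|}
              ≤ ENNReal.ofReal
                  (2 * ((T / Real.log T) * (ε / (C₂ * L)) ^ ((m : ℝ) + 2))
                        ^ (-(m : ℝ) / ((m : ℝ) + 2))
                    * Real.exp (-(Real.log T)
                        * (C₁ * ((T / Real.log T) * (ε / (C₂ * L)) ^ ((m : ℝ) + 2)) - 1))) :=
  stmt_5_general m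
end

section
/- Let (δ_T) be defined by δ_T = 2 D_T^{−m/(m+2)} exp(−log(μ_T)[C₁ D_T − 1]) + 2 μ_T β_{a_T − d} with μ_T = ⌈√T⌉, a_T = ⌈√T⌉, L_T = (log T)^{1/(m+2)}, D_T = (μ_T/log μ_T)(ε/(C₂ L_T))^{m+2}, and β_k ≤ c·exp(−k^r) for some c, r > 0 (exponential β-mixing). Then ∑_{T=1}^∞ δ_T < ∞ for every fixed ε > 0. -/
open Filter Real

set_option maxHeartbeats 1000000 in
/-- Summability of the deviation bounds `δ_T` under exponential β-mixing, with the
choices `μ_T = a_T = ⌈√T⌉` and `L_T = (log T)^{1/(m+2)}`: the key quantitative step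
for the Borel–Cantelli argument. -/
theorem stmt_13 (m d : ℕ) (hm : 0 < m) (C₁ C₂ c r ε : ℝ)
    (hC₁ : 0 < C₁) (hC₂ : 0 < C₂) (hc : 0 < c) (hr : 0 < r) (hε : 0 < ε)
    (β : ℕ → ℝ) (hβ0 : ∀ k, 0 ≤ β k)
    (hβ : ∀ k, β k ≤ c * Real.exp (-((k : ℝ) ^ r))) :
    Summable (fun T : ℕ =>
      let μT : ℝ := (⌈Real.sqrt T⌉₊ : ℝ)
      let aT : ℕ := ⌈Real.sqrt T⌉₊
      let LT : ℝ := (Real.log T) ^ (1 / ((m : ℝ) + 2))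
      let D : ℝ := (μT / Real.log μT) * (ε / (C₂ * LT)) ^ ((m : ℝ) + 2)
      2 * D ^ (-(m : ℝ) / ((m : ℝ) + 2))
          * Real.exp (-(Real.log μT) * (C₁ * D - 1))
        + 2 * μT * β (aT - d)) := by
  have hp : (0:ℝ) < (m:ℝ) + 2 := by positivity
  set p : ℝ := (m:ℝ) + 2 with hpdef
  set K : ℝ := (ε / C₂) ^ p with hKdef
  have hKpos : 0 < K := Real.rpow_pos_of_pos (by positivity) _
  set M : ℝ := max 1 (5 / C₁) with hMdef
  have hM0 : (0:ℝ) < M := lt_of_lt_of_le one_pos (le_max_left _ _)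
  clear_value p K M
  -- summable comparison sequence
  have hg : Summable (fun n : ℕ => (n:ℝ) ^ (-2 : ℝ)) :=
    Real.summable_nat_rpow.2 (by norm_num)
  apply summable_of_isBigO_nat hg
  rw [Asymptotics.isBigO_iff]
  refine ⟨3, ?_⟩
  -- Eventual fact 1 : sqrt T is large
  have h1 : ∀ᶠ T : ℕ in atTop, max 4 (2*(d:ℝ)+2) ≤ Real.sqrt T := by
    set B : ℝ := max 4 (2*(d:ℝ)+2) with hBdef
    have hB0 : (0:ℝ) ≤ B := le_trans (by norm_num) (le_max_left _ _)
    filter_upwards [eventually_ge_atTop ⌈B^2⌉₊] with T hT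
    rw [show Real.sqrt T = Real.sqrt T from rfl, Real.le_sqrt hB0]
    calc B ^ 2 ≤ (⌈B^2⌉₊ : ℝ) := Nat.le_ceil _
      _ ≤ (T:ℝ) := Nat.cast_le.2 hT
    · exact Nat.cast_nonneg T
  -- Eventual fact 2 : (log T)^2 is small compared to sqrt T
  have h2 : ∀ᶠ T : ℕ in atTop,
      Real.log T * Real.log T < (K / M) * Real.sqrt T := by
    have hq : Tendsto (fun x : ℝ => Real.log x ^ (2:ℝ) / x ^ ((1:ℝ)/2)) atTop (nhds 0) :=
      (isLittleO_log_rpow_rpow_atTop 2 (by norm_num : (0:ℝ) < 1/2)).tendsto_div_nhds_zero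
    have hqn : Tendsto (fun T : ℕ => Real.log T ^ (2:ℝ) / (T:ℝ) ^ ((1:ℝ)/2)) atTop (nhds 0) :=
      hq.comp tendsto_natCast_atTop_atTop
    filter_upwards [hqn.eventually_lt_const (div_pos hKpos hM0),
        eventually_ge_atTop 3] with T hTq hT3
    have hT1 : (1:ℝ) < T := by exact_mod_cast Nat.lt_of_lt_of_le (by norm_num) hT3
    have hT0 : (0:ℝ) < T := lt_trans one_pos hT1
    have hsq : (T:ℝ) ^ ((1:ℝ)/2) = Real.sqrt T := (Real.sqrt_eq_rpow _).symm
    have hspos : 0 < Real.sqrt (T:ℝ) := Real.sqrt_pos.2 hT0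
    have hlog2 : Real.log T ^ (2:ℝ) = Real.log T * Real.log T := by
      rw [show (2:ℝ) = ((2:ℕ):ℝ) by norm_num, Real.rpow_natCast]; ring
    rw [hsq, hlog2, div_lt_iff₀ hspos] at hTq
    calc Real.log T * Real.log T < K / M * Real.sqrt T := hTq
      _ = (K / M) * Real.sqrt T := rfl
  -- Eventual fact 3 : exponential beats polynomial for the mixing term
  have h3 : ∀ᶠ T : ℕ in atTop,
      4*c*((T:ℝ) ^ ((5:ℝ)/2) * Real.exp (-(((1:ℝ)/2)^r * (T:ℝ) ^ (r/2)))) < 1 := by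
    have hb : (0:ℝ) < ((1:ℝ)/2)^r := Real.rpow_pos_of_pos (by norm_num) _
    have hbase : Tendsto (fun y : ℝ => y ^ ((5:ℝ)/r) * Real.exp (-(((1:ℝ)/2)^r) * y))
        atTop (nhds 0) := tendsto_rpow_mul_exp_neg_mul_atTop_nhds_zero _ _ hb
    have hcomp : Tendsto (fun x : ℝ =>
        (x ^ (r/2)) ^ ((5:ℝ)/r) * Real.exp (-(((1:ℝ)/2)^r) * x ^ (r/2)))
        atTop (nhds 0) := hbase.comp (tendsto_rpow_atTop (by positivity))
    have hEq : (fun x : ℝ =>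
        (x ^ (r/2)) ^ ((5:ℝ)/r) * Real.exp (-(((1:ℝ)/2)^r) * x ^ (r/2)))
        =ᶠ[atTop] (fun x : ℝ => x ^ ((5:ℝ)/2) * Real.exp (-(((1:ℝ)/2)^r * x ^ (r/2)))) := by
      filter_upwards [eventually_ge_atTop (0:ℝ)] with x hx
      rw [← Real.rpow_mul hx]
      have : r/2 * ((5:ℝ)/r) = (5:ℝ)/2 := by field_simp
      rw [this, neg_mul]
    have hT : Tendsto (fun x : ℝ => 4*c*(x ^ ((5:ℝ)/2) * Real.exp (-(((1:ℝ)/2)^r * x ^ (r/2)))))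
        atTop (nhds 0) := by
      have := ((hcomp.congr' hEq).const_mul (4*c))
      simpa using this
    exact (hT.comp tendsto_natCast_atTop_atTop).eventually_lt_const one_pos
  filter_upwards [h1, h2, h3] with T hs hlg hH
  dsimp only
  -- notation
  set s : ℝ := Real.sqrt T with hsdef
  have hs4 : (4:ℝ) ≤ s := le_trans (le_max_left _ _) hs
  have hsd : 2*(d:ℝ)+2 ≤ s := le_trans (le_max_right _ _) hs
  have hs0 : (0:ℝ) < s := by linarith
  have hT0 : (0:ℝ) < T := Real.sqrt_pos.1 hs0
  have hss : s * s = (T:ℝ) := Real.mul_self_sqrt (Nat.cast_nonneg T)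
  have hT16 : (16:ℝ) ≤ T := by nlinarith
  have hT1 : (1:ℝ) < T := by linarith
  have hlogT : 0 < Real.log T := Real.log_pos hT1
  set μ : ℝ := (⌈s⌉₊ : ℝ) with hμdef
  have hμl : s ≤ μ := Nat.le_ceil _
  have hμu : μ ≤ s + 1 := le_of_lt (Nat.ceil_lt_add_one (Real.sqrt_nonneg _))
  have hμ1 : (1:ℝ) < μ := by linarith
  have hlogμ : 0 < Real.log μ := Real.log_pos hμ1
  have hμT : μ ≤ (T:ℝ) := by nlinarith
  have hlogμle : Real.log μ ≤ Real.log T := Real.log_le_log (by linarith) hμT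
  have hlogμge : Real.log T / 2 ≤ Real.log μ := by
    have : Real.log s = Real.log T / 2 := Real.log_sqrt (Nat.cast_nonneg T)
    calc Real.log T / 2 = Real.log s := this.symm
      _ ≤ Real.log μ := Real.log_le_log hs0 hμl
  -- the D value
  set LT : ℝ := (Real.log T) ^ (1 / p) with hLTdef
  have hLTpos : 0 < LT := Real.rpow_pos_of_pos hlogT _
  have hLp : LT ^ p = Real.log T := by
    rw [hLTdef, ← Real.rpow_mul hlogT.le, one_div, inv_mul_cancel₀ hp.ne', Real.rpow_one]
  set D : ℝ := (μ / Real.log μ) * (ε / (C₂ * LT)) ^ p with hDdef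
  have hDval : D = μ / Real.log μ * (K / Real.log T) := by
    rw [hDdef, hKdef, ← div_div, Real.div_rpow (by positivity) hLTpos.le, hLp]
  have hDgeM : M ≤ D := by
    have hstep : s / Real.log T ≤ μ / Real.log μ :=
      div_le_div₀ (by positivity) hμl hlogμ hlogμle
    have hlow : M ≤ K * s / (Real.log T * Real.log T) := by
      rw [le_div_iff₀ (by positivity)]
      have h' := mul_lt_mul_of_pos_left hlg hM0
      have : M * (K / M * s) = K * s := by
        rw [← mul_assoc, mul_comm M (K/M), div_mul_cancel₀ K hM0.ne']
      nlinarith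
    calc M ≤ K * s / (Real.log T * Real.log T) := hlow
      _ = s / Real.log T * (K / Real.log T) := by
          rw [div_mul_div_comm, mul_comm K s]
      _ ≤ μ / Real.log μ * (K / Real.log T) :=
          mul_le_mul_of_nonneg_right hstep (by positivity)
      _ = D := hDval.symm
  have hD1 : (1:ℝ) ≤ D := le_trans (by rw [hMdef]; exact le_max_left _ _) hDgeM
  have hD5 : 5 / C₁ ≤ D := le_trans (by rw [hMdef]; exact le_max_right _ _) hDgeM
  have hD0 : (0:ℝ) < D := lt_of_lt_of_le one_pos hD1
  -- first term bound
  have hb1 : D ^ (-(m:ℝ) / p) ≤ 1 :=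
    Real.rpow_le_one_of_one_le_of_nonpos hD1
      (div_nonpos_of_nonpos_of_nonneg (by simp) hp.le)
  have hC1D : (5:ℝ) ≤ C₁ * D := by
    have := mul_le_mul_of_nonneg_left hD5 hC₁.le
    rwa [mul_div_cancel₀ _ hC₁.ne'] at this
  have hb2 : Real.exp (-(Real.log μ) * (C₁ * D - 1)) ≤ Real.exp (Real.log T * (-2)) := by
    apply Real.exp_le_exp.2
    have h4 : (4:ℝ) ≤ C₁ * D - 1 := by linarith
    nlinarith [mul_le_mul_of_nonneg_left h4 hlogμ.le,
      mul_le_mul_of_nonneg_right hlogμge (show (0:ℝ) ≤ 4 by norm_num)]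
  have hrpow2 : Real.exp (Real.log T * (-2)) = (T:ℝ) ^ (-2:ℝ) :=
    (Real.rpow_def_of_pos hT0 _).symm
  have hterm1 : 2 * D ^ (-(m:ℝ) / p) * Real.exp (-(Real.log μ) * (C₁ * D - 1))
      ≤ 2 * (T:ℝ) ^ (-2:ℝ) := by
    calc 2 * D ^ (-(m:ℝ) / p) * Real.exp (-(Real.log μ) * (C₁ * D - 1))
        ≤ 2 * 1 * Real.exp (Real.log T * (-2)) := by
          apply mul_le_mul
          · exact mul_le_mul_of_nonneg_left hb1 (by norm_num)
          · exact hb2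
          · positivity
          · norm_num
      _ = 2 * (T:ℝ) ^ (-2:ℝ) := by rw [hrpow2]; ring
  -- second term bound
  set a : ℕ := ⌈s⌉₊ with hadef
  have hda : d ≤ a := by
    have : (d:ℝ) ≤ (a:ℝ) := by
      have hd2 : (d:ℝ) ≤ 2*(d:ℝ)+2 := by linarith [Nat.cast_nonneg (α := ℝ) d]
      calc (d:ℝ) ≤ 2*(d:ℝ)+2 := hd2
        _ ≤ s := hsd
        _ ≤ μ := hμl
    exact_mod_cast this
  have hcast : ((a - d : ℕ) : ℝ) = (a:ℝ) - d := by
    rw [Nat.cast_sub hda]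
  have hge : s/2 ≤ ((a - d : ℕ) : ℝ) := by
    rw [hcast]
    have : s ≤ (a:ℝ) := hμl
    linarith
  have hexp : Real.exp (-((((a - d : ℕ) : ℝ)) ^ r)) ≤ Real.exp (-((s/2) ^ r)) := by
    apply Real.exp_le_exp.2
    apply neg_le_neg
    exact Real.rpow_le_rpow (by positivity) hge hr.le
  have hβ2 : β (a - d) ≤ c * Real.exp (-((s/2) ^ r)) :=
    le_trans (hβ _) (mul_le_mul_of_nonneg_left hexp hc.le)
  have hident : (s/2) ^ r = ((1:ℝ)/2)^r * (T:ℝ) ^ (r/2) := by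
    have h1 : s/2 = s * (1/2 : ℝ) := by ring
    rw [h1, Real.mul_rpow (Real.sqrt_nonneg _) (by norm_num)]
    have h2 : s ^ r = (T:ℝ) ^ (r/2) := by
      rw [hsdef, Real.sqrt_eq_rpow, ← Real.rpow_mul (Nat.cast_nonneg T)]
      congr 1; ring
    rw [h2]; ring
  have hTs : s = (T:ℝ) ^ ((1:ℝ)/2) := Real.sqrt_eq_rpow _
  have h52 : (T:ℝ) ^ ((5:ℝ)/2) * (T:ℝ) ^ (-2:ℝ) = (T:ℝ) ^ ((1:ℝ)/2) := by
    rw [← Real.rpow_add hT0]; norm_num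
  have hterm2 : 2 * μ * β (a - d) ≤ (T:ℝ) ^ (-2:ℝ) := by
    have step1 : 2 * μ * β (a - d) ≤ (2 * (2*s)) * (c * Real.exp (-((s/2) ^ r))) := by
      apply mul_le_mul _ hβ2 (hβ0 _) (by positivity)
      have : μ ≤ 2 * s := by linarith
      linarith
    have step2 : (2 * (2*s)) * (c * Real.exp (-((s/2) ^ r)))
        = 4*c*((T:ℝ) ^ ((5:ℝ)/2) * Real.exp (-(((1:ℝ)/2)^r * (T:ℝ) ^ (r/2)))) * (T:ℝ) ^ (-2:ℝ) := by
      rw [hident, hTs, ← h52]; ring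
    calc 2 * μ * β (a - d) ≤ (2 * (2*s)) * (c * Real.exp (-((s/2) ^ r))) := step1
      _ = 4*c*((T:ℝ) ^ ((5:ℝ)/2) * Real.exp (-(((1:ℝ)/2)^r * (T:ℝ) ^ (r/2)))) * (T:ℝ) ^ (-2:ℝ) := step2
      _ ≤ 1 * (T:ℝ) ^ (-2:ℝ) :=
          mul_le_mul_of_nonneg_right hH.le (Real.rpow_nonneg (Nat.cast_nonneg T) _)
      _ = (T:ℝ) ^ (-2:ℝ) := one_mul _
  -- combine
  show ‖2 * D ^ (-(m:ℝ) / p) * Real.exp (-(Real.log μ) * (C₁ * D - 1))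
      + 2 * μ * β (a - d)‖ ≤ 3 * ‖(T:ℝ) ^ (-2:ℝ)‖
  have hnn1 : 0 ≤ 2 * D ^ (-(m:ℝ) / p) * Real.exp (-(Real.log μ) * (C₁ * D - 1)) := by
    positivity
  have hnn2 : 0 ≤ 2 * μ * β (a - d) := by
    apply mul_nonneg (by positivity) (hβ0 _)
  have hnng : 0 ≤ (T:ℝ) ^ (-2:ℝ) := Real.rpow_nonneg (Nat.cast_nonneg T) _
  rw [Real.norm_eq_abs, Real.norm_eq_abs, abs_of_nonneg (by linarith), abs_of_nonneg hnng]
  linarith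
end
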